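/- arXiv:1606.04988 — 3 statements merged into one kernel-verified Lean document; each statement's English description precedes it below -/
import Mathlib

section
/- Let t ≥ 1 and K ≥ 1 be natural numbers and γ ≥ 0 a real number. Suppose that for each s = 1, …, t+1 we are given a family of s 'leaves', consisting of weights f_s : {1,…,s} → ℝ with f_s(n) ≥ 0 and Σ_n f_s(n) = 1, and class distributions π_s : {1,…,s} → (probability vectors on {1,…,K}). Define W_s = Σ_{n=1}^{s} f_s(n)·H(π_s(n)), where H is the Shannon entropy in nats. Assume that for every s with 1 ≤ s ≤ t, the splitting step decreases the weighted entropy by at least γ times the largest leaf weight: W_s − W_{s+1} ≥ γ · max_{1 ≤ n ≤ s} f_s(n). Then the multiclass error rate of the final family satisfies Σ_{n=1}^{t+1} f_{t+1}(n)·(1 − max_{1 ≤ y ≤ K} π_{t+1}(n)(y)) ≤ H(π_1(1)) − γ·ln(t+1). -/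
/-- Shannon entropy in nats of a vector `p`, with the convention `0 * ln 0 = 0`. -/
noncomputable def shannonEntropyNats {ι : Type*} [Fintype ι] (p : ι → ℝ) : ℝ :=
  ∑ i, Real.negMulLog (p i)

/-!
The leaf weights are a probability vector on `s` leaves, so the largest one is at least `1 / s`,
and the weighted entropy `W s` drops by at least `γ / s` at step `s`. Telescoping gives
`W (t + 1) ≤ W 1 - γ (1 + 1/2 + ⋯ + 1/t) ≤ H(π₁) - γ ln (t + 1)`. Finally, for a probability vector `p` with
largest entry `M`, `1 - M ≤ ∑ p (1 - p) ≤ ∑ -p ln p` because `-ln x ≥ 1 - x`, so the error of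
every leaf is bounded by its entropy.
-/

open Finset

lemma mul_one_sub_le_negMulLog {x : ℝ} (hx : 0 ≤ x) : x * (1 - x) ≤ Real.negMulLog x := by
  rcases hx.eq_or_lt with rfl | hpos
  · simp
  · rw [Real.negMulLog, neg_mul, ← mul_neg]
    exact mul_le_mul_of_nonneg_left (by linarith [Real.log_le_sub_one_of_pos hpos]) hx

lemma one_sub_sup'_le_shannonEntropyNats {ι : Type*} [Fintype ι] (hι : (univ : Finset ι).Nonempty)
    (p : ι → ℝ) (hp0 : ∀ i, 0 ≤ p i) (hp1 : ∑ i, p i = 1) :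
    1 - univ.sup' hι p ≤ shannonEntropyNats p :=
  calc 1 - univ.sup' hι p = ∑ i, p i * (1 - univ.sup' hι p) := by rw [← sum_mul, hp1, one_mul]
    _ ≤ ∑ i, p i * (1 - p i) := by
        gcongr with i
        · exact hp0 i
        · exact le_sup' p (mem_univ i)
    _ ≤ shannonEntropyNats p := sum_le_sum fun i _ ↦ mul_one_sub_le_negMulLog (hp0 i)

lemma inv_card_le_sup'_of_sum_eq_one {ι : Type*} [Fintype ι] (hι : (univ : Finset ι).Nonempty)
    (f : ι → ℝ) (hf : ∑ i, f i = 1) : (Fintype.card ι : ℝ)⁻¹ ≤ univ.sup' hι f := by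
  have hsum : ∑ i, f i ≤ Fintype.card ι • univ.sup' hι f :=
    sum_le_card_nsmul _ _ _ fun i _ ↦ le_sup' f (mem_univ i)
  rw [hf, nsmul_eq_mul] at hsum
  have hcard : (0 : ℝ) < Fintype.card ι := by exact_mod_cast Fintype.card_pos_iff.2 (univ_nonempty_iff.1 hι)
  rwa [inv_le_iff_one_le_mul₀' hcard]

lemma le_sub_mul_harmonic_of_sub_succ_ge (W : ℕ → ℝ) (γ : ℝ) (n : ℕ)
    (hW : ∀ s, 1 ≤ s → s ≤ n → γ / s ≤ W s - W (s + 1)) :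
    W (n + 1) ≤ W 1 - γ * harmonic n := by
  induction n with
  | zero => simp
  | succ n ih =>
    have hlast := hW (n + 1) (by omega) le_rfl
    have := ih fun s hs hsn ↦ hW s hs (by omega)
    push_cast [harmonic_succ] at hlast ⊢
    rw [div_eq_mul_inv] at hlast
    linarith

lemma le_sub_mul_log_of_sub_succ_ge (W : ℕ → ℝ) {γ : ℝ} (hγ : 0 ≤ γ) (n : ℕ)
    (hW : ∀ s, 1 ≤ s → s ≤ n → γ / s ≤ W s - W (s + 1)) :
    W (n + 1) ≤ W 1 - γ * Real.log (n + 1) := by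
  have hlog : Real.log (n + 1) ≤ harmonic n := by exact_mod_cast log_add_one_le_harmonic n
  nlinarith [le_sub_mul_harmonic_of_sub_succ_ge W γ n hW]

theorem recall_tree_boosting_bound_general
    (t K : ℕ) (hK : 1 ≤ K) (γ : ℝ) (hγ : 0 ≤ γ)
    (f : (s : ℕ) → Fin s → ℝ) (π : (s : ℕ) → Fin s → Fin K → ℝ)
    (hf0 : ∀ s, 1 ≤ s → s ≤ t + 1 → ∀ n, 0 ≤ f s n)
    (hf1 : ∀ s, 1 ≤ s → s ≤ t + 1 → ∑ n, f s n = 1)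
    (hπ0 : ∀ s, 1 ≤ s → s ≤ t + 1 → ∀ n y, 0 ≤ π s n y)
    (hπ1 : ∀ s, 1 ≤ s → s ≤ t + 1 → ∀ n, ∑ y, π s n y = 1)
    (hstep : ∀ s, (hs : 1 ≤ s) → s ≤ t →
      (∑ n, f s n * shannonEntropyNats (π s n)) -
          (∑ n, f (s + 1) n * shannonEntropyNats (π (s + 1) n)) ≥
        γ * Finset.univ.sup' ⟨⟨0, hs⟩, Finset.mem_univ _⟩ (f s)) :
    ∑ n, f (t + 1) n *
        (1 - Finset.univ.sup' ⟨⟨0, hK⟩, Finset.mem_univ _⟩ (π (t + 1) n)) ≤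
      shannonEntropyNats (π 1 ⟨0, Nat.one_pos⟩) - γ * Real.log (t + 1) := by
  set W : ℕ → ℝ := fun s ↦ ∑ n, f s n * shannonEntropyNats (π s n)
  have hdecrease : ∀ s, 1 ≤ s → s ≤ t → γ / s ≤ W s - W (s + 1) := fun s hs hst ↦ by
    have hmax := inv_card_le_sup'_of_sum_eq_one ⟨⟨0, hs⟩, mem_univ _⟩ (f s) (hf1 s hs (by omega))
    rw [Fintype.card_fin] at hmax
    calc γ / s = γ * (s : ℝ)⁻¹ := div_eq_mul_inv _ _
      _ ≤ _ := mul_le_mul_of_nonneg_left hmax hγ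
      _ ≤ W s - W (s + 1) := hstep s hs hst
  have hroot : W 1 = shannonEntropyNats (π 1 ⟨0, Nat.one_pos⟩) := by
    have h1 := hf1 1 le_rfl (by omega)
    simp only [W, Fin.sum_univ_one] at h1 ⊢
    rw [h1, one_mul]
    rfl
  calc _ ≤ W (t + 1) := sum_le_sum fun n _ ↦ mul_le_mul_of_nonneg_left
          (one_sub_sup'_le_shannonEntropyNats _ _ (hπ0 (t + 1) (by omega) le_rfl n)
            (hπ1 (t + 1) (by omega) le_rfl n))
          (hf0 (t + 1) (by omega) le_rfl n)
    _ ≤ W 1 - γ * Real.log (t + 1) := le_sub_mul_log_of_sub_succ_ge W hγ t hdecrease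
    _ = _ := by rw [hroot]

theorem recall_tree_boosting_bound
    (t K : ℕ) (ht : 1 ≤ t) (hK : 1 ≤ K) (γ : ℝ) (hγ : 0 ≤ γ)
    (f : (s : ℕ) → Fin s → ℝ) (π : (s : ℕ) → Fin s → Fin K → ℝ)
    (hf0 : ∀ s, 1 ≤ s → s ≤ t + 1 → ∀ n, 0 ≤ f s n)
    (hf1 : ∀ s, 1 ≤ s → s ≤ t + 1 → ∑ n, f s n = 1)
    (hπ0 : ∀ s, 1 ≤ s → s ≤ t + 1 → ∀ n y, 0 ≤ π s n y)
    (hπ1 : ∀ s, 1 ≤ s → s ≤ t + 1 → ∀ n, ∑ y, π s n y = 1)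
    (hstep : ∀ s, (hs : 1 ≤ s) → s ≤ t →
      (∑ n, f s n * shannonEntropyNats (π s n)) -
          (∑ n, f (s + 1) n * shannonEntropyNats (π (s + 1) n)) ≥
        γ * Finset.univ.sup' ⟨⟨0, hs⟩, Finset.mem_univ _⟩ (f s)) :
    ∑ n, f (t + 1) n *
        (1 - Finset.univ.sup' ⟨⟨0, hK⟩, Finset.mem_univ _⟩ (π (t + 1) n)) ≤
      shannonEntropyNats (π 1 ⟨0, Nat.one_pos⟩) - γ * Real.log (t + 1) :=
  recall_tree_boosting_bound_general t K hK γ hγ f π hf0 hf1 hπ0 hπ1 hstep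
end

section
/- Let X be a type, N a finite type of tree nodes, K ≥ 1, leaf : X → N the map sending an example to the leaf of a tree T at which it terminates, and label : N → {1,…,K} the tree's prediction at each node. Let path : X → N → ℝ be the path-feature map, satisfying for every x ∈ X: path(x)(n) ∈ {0,1} for all n, path(x)(leaf(x)) = 1, and path(x)(n') = 0 for every n' in the range of leaf with n' ≠ leaf(x). Then there exists a weight matrix W : N → {1,…,K} → ℝ such that for every x ∈ X and every class y ≠ label(leaf(x)), Σ_{n ∈ N} path(x)(n)·W(n)(y) < Σ_{n ∈ N} path(x)(n)·W(n)(label(leaf(x))); i.e., the linear one-against-all scores computed on the path features have label(leaf(x)) as their unique maximizer, so the linear classifier reproduces the tree's prediction T(x) exactly. -/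
theorem path_features_replicate_tree
    (X N : Type*) [Fintype N] (K : ℕ) (hK : 1 ≤ K)
    (leaf : X → N) (label : N → Fin K) (path : X → N → ℝ)
    (hpath01 : ∀ x n, path x n = 0 ∨ path x n = 1)
    (hpathleaf : ∀ x, path x (leaf x) = 1)
    (hpathother : ∀ x n', (∃ x', leaf x' = n') → n' ≠ leaf x → path x n' = 0) :
    ∃ W : N → Fin K → ℝ, ∀ x : X, ∀ y : Fin K, y ≠ label (leaf x) →
      ∑ n, path x n * W n y < ∑ n, path x n * W n (label (leaf x)) := by
  classical
  refine ⟨fun n y => if (∃ x', leaf x' = n) ∧ label n = y then 1 else 0, ?_⟩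
  intro x y hy
  have hsum : ∀ z : Fin K,
      (∑ n, path x n * (if (∃ x', leaf x' = n) ∧ label n = z then 1 else 0)) =
      (if label (leaf x) = z then (1:ℝ) else 0) := by
    intro z
    rw [Finset.sum_eq_single (leaf x)]
    · rw [hpathleaf x]
      by_cases h : label (leaf x) = z
      · simp [h]
      · simp [h]
    · intro n _ hn
      by_cases hr : ∃ x', leaf x' = n
      · rw [hpathother x n hr hn, zero_mul]
      · simp [hr]
    · intro h; exact absurd (Finset.mem_univ _) h
  rw [hsum, hsum]
  simp [Ne.symm hy]
end

section
/- Let X be a measurable space, N a finite type of tree nodes, K ≥ 1, and μ a probability measure on X × {1,…,K}. Let leaf : X → N be a measurable map, label : N → {1,…,K}, and suppose the tree classifier T(x) = label(leaf(x)) achieves error rate ε, i.e. μ{(x,y) : label(leaf(x)) ≠ y} = ε. Let path : X → N → ℝ satisfy, for every x: path(x)(n) ∈ {0,1} for all n, path(x)(leaf(x)) = 1, and path(x)(n') = 0 for every n' in the range of leaf with n' ≠ leaf(x). Then there exists a weight matrix W : N → {1,…,K} → ℝ such that the linear one-against-all classifier g(x) = argmax_{y'} Σ_{n ∈ N} path(x)(n)·W(n)(y')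 has a unique maximizer for every x, g(x) = label(leaf(x)) for every x, and hence μ{(x,y) : g(x) ≠ y} = ε. -/
open MeasureTheory

theorem path_features_achieve_tree_error
    (X : Type*) [MeasurableSpace X] (N : Type*) [Fintype N] [MeasurableSpace N]
    (K : ℕ) (hK : 1 ≤ K)
    (μ : Measure (X × Fin K)) [IsProbabilityMeasure μ]
    (leaf : X → N) (hleaf : Measurable leaf) (label : N → Fin K)
    (ε : ENNReal) (hε : μ {p : X × Fin K | label (leaf p.1) ≠ p.2} = ε)
    (path : X → N → ℝ)
    (hpath01 : ∀ x n, path x n = 0 ∨ path x n = 1)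
    (hpathleaf : ∀ x, path x (leaf x) = 1)
    (hpathother : ∀ x n', (∃ x', leaf x' = n') → n' ≠ leaf x → path x n' = 0) :
    ∃ (W : N → Fin K → ℝ) (g : X → Fin K),
      (∀ x : X, ∀ y' : Fin K, y' ≠ g x →
        ∑ n, path x n * W n y' < ∑ n, path x n * W n (g x)) ∧
      (∀ x : X, g x = label (leaf x)) ∧
      μ {p : X × Fin K | g p.1 ≠ p.2} = ε := by
  classical
  refine ⟨fun n y => if (∃ x', leaf x' = n) ∧ y = label n then 1 else 0,
    fun x => label (leaf x), ?_, fun _ => rfl, hε⟩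
  intro x y' hy
  have key : ∀ y : Fin K,
      (∑ n, path x n * (if (∃ x', leaf x' = n) ∧ y = label n then (1:ℝ) else 0))
      = if y = label (leaf x) then 1 else 0 := by
    intro y
    rw [Finset.sum_eq_single (leaf x)]
    · rw [hpathleaf x, one_mul]
      simp [show ∃ x', leaf x' = leaf x from ⟨x, rfl⟩]
    · intro n _ hn
      by_cases hr : ∃ x', leaf x' = n
      · rw [hpathother x n hr hn, zero_mul]
      · simp [hr]
    · intro h; exact absurd (Finset.mem_univ _) h
  rw [key, key]
  simp [hy]
end
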